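/- arXiv:1501.07687 — 2 statements merged into one kernel-verified Lean document; each statement's English description precedes it below -/
import Mathlib

section
/- Let m ≥ 1 and 0 < ε ≤ 1, and consider the market with items 1,…,m and two additive buyers A and B, where A values every item at m, and B values each item j ≤ m−1 at 1 and values item m at ε. Then every (additive) Walrasian equilibrium of this market has revenue Σ_j p_j ≥ m − 1 + ε. Combined with the existence of an outcome satisfying the SPE characterization condition whose revenue is mε, this shows the ratio of sequential-auction revenue to Walrasian revenue can be made arbitrarily small. -/
/-! In a Walrasian equilibrium every item is priced at least at the loser's value, hence at least
at the smaller of the two values, and B's values add up to `m - 1 + ε`. In the sequential auction,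
however, selling the items in order at price `ε` each, all but the last to B and the last to A,
satisfies the SPE condition: B already gets every item it values above `ε`, and A is indifferent
between the items. -/

open Finset

/-- The set of items that buyer `i` wins among the first `j` items sold, where
`π` is the selling order (`π k` is the `(k+1)`-st item sold) and `win t` is the
buyer who wins item `t`. -/
def soldTo {N : Type*} [DecidableEq N] {m : ℕ} (win : Fin m → N)
    (π : Equiv.Perm (Fin m)) (i : N) (j : ℕ) : Finset (Fin m) :=
  Finset.univ.filter fun t => ((π.symm t : ℕ) < j ∧ win t = i)

/-- Buyer `i`'s utility at the end of the sequential auction. -/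
def util {N : Type*} [DecidableEq N] {m : ℕ} (v : N → Finset (Fin m) → ℝ)
    (win : Fin m → N) (p : Fin m → ℝ) (π : Equiv.Perm (Fin m)) (i : N) : ℝ :=
  v i (soldTo win π i m) - ∑ k ∈ soldTo win π i m, p k

/-- The SPE characterization condition. -/
def SPECond {N : Type*} [DecidableEq N] {m : ℕ} (v : N → Finset (Fin m) → ℝ)
    (win : Fin m → N) (p : Fin m → ℝ) (π : Equiv.Perm (Fin m)) : Prop :=
  (∀ j, 0 ≤ p j) ∧
  (∀ i, 0 ≤ util v win p π i) ∧
  ∀ (i : N) (k : Fin m),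
    v i (insert (π k) (soldTo win π i (k : ℕ))) - p (π k)
        - ∑ t ∈ soldTo win π i (k : ℕ), p t ≤ util v win p π i

/-- A Walrasian equilibrium for additive buyers with per-item values `val`:
prices are nonnegative, each item is sold to a buyer valuing it at least its
price, and no other buyer values it strictly more than its price. -/
def AddWE {N M : Type*} (val : N → M → ℝ) (win : M → N) (p : M → ℝ) : Prop :=
  (∀ j, 0 ≤ p j) ∧
  (∀ j, p j ≤ val (win j) j) ∧
  ∀ (j : M) (i : N), i ≠ win j → val i j ≤ p j


section Walrasian

variable {N M : Type*} {val : N → M → ℝ} {win : M → N} {p : M → ℝ}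

theorem AddWE.min_le_price (h : AddWE val win p) {i i' : N} (hii' : i ≠ i') (j : M) :
    min (val i j) (val i' j) ≤ p j := by
  rcases eq_or_ne i (win j) with rfl | hi
  · exact (min_le_right _ _).trans (h.2.2 j i' hii'.symm)
  · exact (min_le_left _ _).trans (h.2.2 j i hi)

theorem AddWE.sum_min_le_revenue [Fintype M] (h : AddWE val win p) {i i' : N} (hii' : i ≠ i') :
    ∑ j, min (val i j) (val i' j) ≤ ∑ j, p j :=
  sum_le_sum fun j _ => h.min_le_price hii' j

end Walrasian

section Sequential

variable {N : Type*} [DecidableEq N] {m : ℕ} {win : Fin m → N} {π : Equiv.Perm (Fin m)}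

theorem soldTo_eq_filter (i : N) : soldTo win π i m = univ.filter (win · = i) := by
  ext t
  simp [soldTo]

theorem apply_notMem_soldTo (i : N) (k : Fin m) : π k ∉ soldTo win π i k := by
  simp [soldTo]

variable {val : N → Fin m → ℝ} {v : N → Finset (Fin m) → ℝ} {p : Fin m → ℝ}

theorem SPECond_iff_of_additive (hv : ∀ i S, v i S = ∑ j ∈ S, val i j) :
    SPECond v win p π ↔
      (∀ j, 0 ≤ p j) ∧
      (∀ i, 0 ≤ ∑ t ∈ univ.filter (win · = i), (val i t - p t)) ∧
      ∀ i (k : Fin m), ∑ t ∈ insert (π k) (soldTo win π i k), (val i t - p t) ≤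
        ∑ t ∈ univ.filter (win · = i), (val i t - p t) := by
  have hutil : ∀ i, util v win p π i = ∑ t ∈ univ.filter (win · = i), (val i t - p t) := by
    intro i
    rw [util, soldTo_eq_filter, hv, sum_sub_distrib]
  have hdev : ∀ i (k : Fin m),
      v i (insert (π k) (soldTo win π i k)) - p (π k) - ∑ t ∈ soldTo win π i k, p t =
        ∑ t ∈ insert (π k) (soldTo win π i k), (val i t - p t) := by
    intro i k
    rw [hv, sum_sub_distrib, sum_insert (apply_notMem_soldTo i k),
      sum_insert (apply_notMem_soldTo i k)]
    ring
  simp only [SPECond, hutil, hdev]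

end Sequential

theorem SPECond_sell_last_to_zero {n : ℕ} {val : Fin 2 → Fin (n + 1) → ℝ}
    {v : Fin 2 → Finset (Fin (n + 1)) → ℝ} (hv : ∀ i S, v i S = ∑ j ∈ S, val i j) {ε : ℝ}
    (hε : 0 ≤ ε) (hA : ∀ j, val 0 j ≤ val 0 (Fin.last n)) (hAε : ε ≤ val 0 (Fin.last n))
    (hB : ∀ j, ε ≤ val 1 j) (hBlast : val 1 (Fin.last n) = ε) :
    SPECond v (fun t => if t = Fin.last n then 0 else 1) (fun _ => ε) (Equiv.refl _) := by
  set win : Fin (n + 1) → Fin 2 := fun t => if t = Fin.last n then 0 else 1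
  have hwonA : univ.filter (win · = 0) = {Fin.last n} := by
    ext t
    by_cases ht : t = Fin.last n <;> simp [win, ht]
  have hwonB : univ.filter (win · = 1) = univ.erase (Fin.last n) := by
    ext t
    by_cases ht : t = Fin.last n <;> simp [win, ht]
  have hsoldA : ∀ k : Fin (n + 1), soldTo win (Equiv.refl _) 0 k = ∅ := by
    intro k
    ext t
    by_cases ht : t = Fin.last n
    · simp [soldTo, win, ht, (Fin.le_last k).not_gt]
    · simp [soldTo, win, ht]
  have hsurplusB : ∀ t, 0 ≤ val 1 t - ε := fun t => sub_nonneg.mpr (hB t)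
  have hutilB : ∑ t ∈ univ.erase (Fin.last n), (val 1 t - ε) = ∑ t, (val 1 t - ε) :=
    sum_erase _ (sub_eq_zero.mpr hBlast)
  rw [SPECond_iff_of_additive hv]
  refine ⟨fun _ => hε, Fin.forall_fin_two.mpr ⟨?_, ?_⟩,
    Fin.forall_fin_two.mpr ⟨fun k => ?_, fun k => ?_⟩⟩
  · simpa [hwonA] using hAε
  · rw [hwonB, hutilB]
    exact sum_nonneg fun t _ => hsurplusB t
  · simpa [hwonA, hsoldA] using hA k
  · rw [hwonB, hutilB]
    exact sum_le_sum_of_subset_of_nonneg (subset_univ _) fun t _ _ => hsurplusB t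

/-- Items `0, …, m-1` stand for items `1, …, m`.  Buyer `0` (buyer A) is
additive and values every item at `m`; buyer `1` (buyer B) is additive and
values each of the first `m - 1` items at `1` and the last item at `ε`.  Every
Walrasian equilibrium of this market has revenue at least `m - 1 + ε`, while
there is an outcome satisfying the SPE characterization condition whose revenue
is only `m * ε`; hence the ratio of the sequential-auction revenue to the
Walrasian revenue is vanishing. -/
theorem walrasian_vs_spe_revenue (m : ℕ) (hm : 1 ≤ m) (ε : ℝ)
    (hε0 : 0 < ε) (hε1 : ε ≤ 1)
    (val : Fin 2 → Fin m → ℝ)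
    (hval : ∀ i j, val i j =
      if i = 0 then (m : ℝ) else if (j : ℕ) = m - 1 then ε else 1)
    (v : Fin 2 → Finset (Fin m) → ℝ)
    (hv : ∀ i S, v i S = ∑ j ∈ S, val i j) :
    (∀ (win : Fin m → Fin 2) (p : Fin m → ℝ),
        AddWE val win p → (m : ℝ) - 1 + ε ≤ ∑ j, p j) ∧
    (∃ (win : Fin m → Fin 2) (p : Fin m → ℝ) (π : Equiv.Perm (Fin m)),
        SPECond v win p π ∧ (∑ j, p j) = m * ε) := by
  obtain ⟨n, rfl⟩ := Nat.exists_eq_add_of_le' hm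
  have hA : ∀ j, val 0 j = n + 1 := fun j => by simp [hval]
  have hB : ∀ j, val 1 j = if j = Fin.last n then ε else 1 := fun j => by
    simp [hval, Fin.ext_iff]
  have hBA : ∀ j, val 1 j ≤ val 0 j := fun j => by
    rw [hA, hB]
    split_ifs <;> linarith [(n.cast_nonneg : (0 : ℝ) ≤ n)]
  refine ⟨fun win p hwe => ?_, ?_⟩
  · calc ((n + 1 : ℕ) : ℝ) - 1 + ε = ∑ j, val 1 j := by
          simp [Fin.sum_univ_castSucc, hB, Fin.castSucc_ne_last]
      _ = ∑ j, min (val 0 j) (val 1 j) := by simp only [min_eq_right (hBA _)]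
      _ ≤ ∑ j, p j := hwe.sum_min_le_revenue zero_ne_one
  · refine ⟨_, _, _, SPECond_sell_last_to_zero hv hε0.le (fun j => by rw [hA, hA])
      (by simpa [hB] using hBA (Fin.last n)) (fun j => ?_) (by simp [hB]), by simp⟩
    rw [hB]
    split_ifs <;> linarith
end

section
/- Suppose every buyer's valuation is monotone (v_i(S) ≤ v_i(T) whenever S ⊆ T), submodular (v_i(S ∪ {g}) − v_i(S) ≥ v_i(T ∪ {g}) − v_i(T) whenever S ⊆ T and g ∉ T), and satisfies v_i(∅) = 0. Suppose the allocation win and selling order π are greedy: for every step 1 ≤ k ≤ m, every buyer i, and every item g ∉ {π_1,…,π_{k−1}}, the marginal value v_{win(π_k)}(x_{win(π_k)}(π,k−1) ∪ {π_k}) − v_{win(π_k)}(x_{win(π_k)}(π,k−1)) is at least v_i(x_i(π,k−1) ∪ {g}) − v_i(x_i(π,k−1)). Then the social welfare of the greedy allocation, Σ_{i∈N} v_i(x_i(π,m)), is at least OPT/2. -/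
open Finset

/-!
Write `S i` for buyer `i`'s greedy bundle, `W = ∑ i, v i (S i)` for the greedy welfare and `δ k`
for the marginal value gained at step `k`, so that `W = ∑ k, δ k` by telescoping. For an arbitrary
allocation with bundles `A i`, monotonicity and submodularity give
`v i (A i) ≤ v i (S i) + ∑ g ∈ A i, (v i (S i ∪ {g}) - v i (S i))`, and each of these marginal
values is at most `δ (π⁻¹ g)`: it can only have been larger when `g` was sold, and then greediness
bounds it. Summing over buyers charges every item once, so `OPT ≤ W + ∑ k, δ k = 2 W`.
-/

section Marginal

variable {α : Type*} [DecidableEq α]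

def marginal (v : Finset α → ℝ) (S : Finset α) (g : α) : ℝ :=
  v (insert g S) - v S

lemma marginal_of_mem {v : Finset α → ℝ} {S : Finset α} {g : α} (hg : g ∈ S) :
    marginal v S g = 0 := by
  simp [marginal, insert_eq_of_mem hg]

lemma marginal_nonneg {v : Finset α → ℝ} (hmono : Monotone v) (S : Finset α) (g : α) :
    0 ≤ marginal v S g :=
  sub_nonneg.mpr (hmono (subset_insert g S))

lemma apply_union_le_add_sum_marginal {v : Finset α → ℝ}
    (hsubmod : ∀ S T g, S ⊆ T → g ∉ T → marginal v T g ≤ marginal v S g) (S B : Finset α) :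
    v (S ∪ B) ≤ v S + ∑ g ∈ B, marginal v S g := by
  induction B using Finset.induction_on with
  | empty => simp
  | @insert g B hgB ih =>
    rw [sum_insert hgB, union_insert]
    by_cases hg : g ∈ S ∪ B
    · have hgS : g ∈ S := (mem_union.mp hg).resolve_right hgB
      rw [insert_eq_of_mem hg, marginal_of_mem hgS, zero_add]
      exact ih
    · have hstep : v (insert g (S ∪ B)) = v (S ∪ B) + marginal v (S ∪ B) g := by
        rw [marginal, add_sub_cancel]
      have := hsubmod S (S ∪ B) g subset_union_left hg
      linarith

lemma sum_fiber_le_sum_add_sum_of_marginal_le {N : Type*} [Fintype N] [DecidableEq N]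
    [Fintype α] {v : N → Finset α → ℝ} (hmono : ∀ i, Monotone (v i))
    (hsubmod : ∀ i S T g, S ⊆ T → g ∉ T → marginal (v i) T g ≤ marginal (v i) S g)
    {S : N → Finset α} {c : α → ℝ} (hc : ∀ i g, marginal (v i) (S i) g ≤ c g) (A : α → N) :
    ∑ i, v i (univ.filter fun g => A g = i) ≤ ∑ i, v i (S i) + ∑ g, c g :=
  calc ∑ i, v i (univ.filter fun g => A g = i)
      ≤ ∑ i, (v i (S i) + ∑ g ∈ univ.filter (fun g => A g = i), c g) := by
        gcongr with i
        calc v i (univ.filter fun g => A g = i)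
            ≤ v i (S i ∪ univ.filter fun g => A g = i) := hmono i subset_union_right
          _ ≤ v i (S i) + ∑ g ∈ univ.filter (fun g => A g = i), marginal (v i) (S i) g :=
            apply_union_le_add_sum_marginal (hsubmod i) _ _
          _ ≤ _ := by gcongr with g; exact hc i g
    _ = ∑ i, v i (S i) + ∑ g, c g := by rw [sum_add_distrib, sum_fiberwise]

end Marginal

section Greedy

variable {N : Type*} [DecidableEq N] {m : ℕ} (v : N → Finset (Fin m) → ℝ) (win : Fin m → N)
  (π : Equiv.Perm (Fin m))

lemma mem_soldTo {i : N} {j : ℕ} {t : Fin m} :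
    t ∈ soldTo win π i j ↔ (π.symm t : ℕ) < j ∧ win t = i := by
  simp [soldTo]

lemma soldTo_zero (i : N) : soldTo win π i 0 = ∅ := by
  ext t; simp [mem_soldTo]

lemma soldTo_mono (i : N) {j j' : ℕ} (h : j ≤ j') : soldTo win π i j ⊆ soldTo win π i j' :=
  fun _ ht => (mem_soldTo win π).mpr
    ⟨((mem_soldTo win π).mp ht).1.trans_le h, ((mem_soldTo win π).mp ht).2⟩

lemma soldTo_succ (i : N) (k : Fin m) :
    soldTo win π i ((k : ℕ) + 1) =
      if win (π k) = i then insert (π k) (soldTo win π i k) else soldTo win π i k := by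
  ext t
  have hk : (π.symm t : ℕ) = k ↔ t = π k := by rw [Fin.val_inj, Equiv.symm_apply_eq]
  split_ifs with h <;> simp only [mem_insert, mem_soldTo] <;> grind

def greedyGain (k : Fin m) : ℝ :=
  marginal (v (win (π k))) (soldTo win π (win (π k)) k) (π k)

lemma sum_soldTo_succ [Fintype N] (k : Fin m) :
    ∑ i, v i (soldTo win π i ((k : ℕ) + 1)) =
      ∑ i, v i (soldTo win π i k) + greedyGain v win π k := by
  have hstep : ∀ i, v i (soldTo win π i ((k : ℕ) + 1)) =
      v i (soldTo win π i k) + if win (π k) = i then greedyGain v win π k else 0 := by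
    intro i
    rw [soldTo_succ]
    split_ifs with h
    · subst h; rw [greedyGain, marginal, add_sub_cancel]
    · rw [add_zero]
  rw [sum_congr rfl fun i _ => hstep i, sum_add_distrib, sum_ite_eq, if_pos (mem_univ _)]

lemma sum_soldTo_eq_sum_greedyGain [Fintype N] (hempty : ∀ i, v i ∅ = 0) :
    ∑ i, v i (soldTo win π i m) = ∑ k, greedyGain v win π k := by
  let welfare (j : ℕ) : ℝ := ∑ i, v i (soldTo win π i j)
  calc welfare m = welfare m - welfare 0 := by simp [welfare, soldTo_zero, hempty]
    _ = ∑ j ∈ range m, (welfare (j + 1) - welfare j) := (sum_range_sub welfare m).symm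
    _ = ∑ k : Fin m, (welfare (k + 1) - welfare k) := (Fin.sum_univ_eq_sum_range _ m).symm
    _ = ∑ k, greedyGain v win π k := by
      simp only [welfare, sum_soldTo_succ, add_sub_cancel_left]

variable {v win π}

lemma marginal_soldTo_le_greedyGain (hmono : ∀ i, Monotone (v i))
    (hsubmod : ∀ i S T g, S ⊆ T → g ∉ T → marginal (v i) T g ≤ marginal (v i) S g)
    (hgreedy : ∀ (k : Fin m) i g, (k : ℕ) ≤ π.symm g →
      marginal (v i) (soldTo win π i k) g ≤ greedyGain v win π k)
    (i : N) (g : Fin m) :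
    marginal (v i) (soldTo win π i m) g ≤ greedyGain v win π (π.symm g) := by
  by_cases hg : g ∈ soldTo win π i m
  · rw [marginal_of_mem hg]
    exact marginal_nonneg (hmono _) _ _
  · calc marginal (v i) (soldTo win π i m) g
        ≤ marginal (v i) (soldTo win π i (π.symm g)) g :=
          hsubmod i _ _ g (soldTo_mono win π i (π.symm g).isLt.le) hg
      _ ≤ greedyGain v win π (π.symm g) := hgreedy _ i g le_rfl

end Greedy

theorem greedy_allocation_half_opt_general {N : Type*} [Fintype N] [DecidableEq N]
    {m : ℕ}
    (v : N → Finset (Fin m) → ℝ)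
    (hempty : ∀ i, v i ∅ = 0)
    (hmono : ∀ i S T, S ⊆ T → v i S ≤ v i T)
    (hsubmod : ∀ (i : N) (S T : Finset (Fin m)) (g : Fin m), S ⊆ T → g ∉ T →
        v i (insert g T) - v i T ≤ v i (insert g S) - v i S)
    (win : Fin m → N) (π : Equiv.Perm (Fin m))
    (hgreedy : ∀ (k : Fin m) (i : N) (g : Fin m), (k : ℕ) ≤ (π.symm g : ℕ) →
        v i (insert g (soldTo win π i (k : ℕ))) - v i (soldTo win π i (k : ℕ))
          ≤ v (win (π k)) (insert (π k) (soldTo win π (win (π k)) (k : ℕ)))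
              - v (win (π k)) (soldTo win π (win (π k)) (k : ℕ))) :
    ∀ A : Fin m → N,
      ∑ i, v i (Finset.univ.filter fun j => A j = i)
        ≤ 2 * ∑ i, v i (soldTo win π i m) := by
  intro A
  have hmono' : ∀ i, Monotone (v i) := fun i S T => hmono i S T
  calc ∑ i, v i (univ.filter fun j => A j = i)
      ≤ ∑ i, v i (soldTo win π i m) + ∑ g, greedyGain v win π (π.symm g) :=
        sum_fiber_le_sum_add_sum_of_marginal_le hmono' hsubmod
          (marginal_soldTo_le_greedyGain hmono' hsubmod hgreedy) A
    _ = 2 * ∑ i, v i (soldTo win π i m) := by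
        rw [Equiv.sum_comp π.symm (greedyGain v win π),
          ← sum_soldTo_eq_sum_greedyGain v win π hempty, two_mul]

/-- If all buyers have monotone, submodular, normalized valuations and the
allocation `win` together with the selling order `π` is greedy — at every step
the marginal value of the allocated buyer for the item sold is at least the
marginal value of any buyer for any yet-unsold item — then the social welfare
of the greedy allocation is at least half of the optimal social welfare. -/
theorem greedy_allocation_half_opt {N : Type*} [Fintype N] [DecidableEq N]
    {m : ℕ} (hm : 1 ≤ m)
    (v : N → Finset (Fin m) → ℝ)
    (hempty : ∀ i, v i ∅ = 0)
    (hmono : ∀ i S T, S ⊆ T → v i S ≤ v i T)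
    (hsubmod : ∀ (i : N) (S T : Finset (Fin m)) (g : Fin m), S ⊆ T → g ∉ T →
        v i (insert g T) - v i T ≤ v i (insert g S) - v i S)
    (win : Fin m → N) (π : Equiv.Perm (Fin m))
    (hgreedy : ∀ (k : Fin m) (i : N) (g : Fin m), (k : ℕ) ≤ (π.symm g : ℕ) →
        v i (insert g (soldTo win π i (k : ℕ))) - v i (soldTo win π i (k : ℕ))
          ≤ v (win (π k)) (insert (π k) (soldTo win π (win (π k)) (k : ℕ)))
              - v (win (π k)) (soldTo win π (win (π k)) (k : ℕ))) :
    ∀ A : Fin m → N,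
      ∑ i, v i (Finset.univ.filter fun j => A j = i)
        ≤ 2 * ∑ i, v i (soldTo win π i m) :=
  greedy_allocation_half_opt_general v hempty hmono hsubmod win π hgreedy
end
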